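/- Merge is commutative: If T = T1 ⋈ T2 holds for local types, then T = T2 ⋈ T1 also holds. -/
import Mathlib


namespace GC

/-! ## Basic identifiers -/

abbrev Port := ℕ
abbrev Role := ℕ
abbrev MLabel := ℕ   -- message labels ℓ
abbrev RecVar := ℕ
abbrev VarName := ℕ

/-- Base types `B`, including the type `ChoT` of the selection values. -/
inductive BaseTy : Type
  | chot
  | bt (n : ℕ)
deriving DecidableEq

/-- Values: the selection values `inl`/`inr` and values of base types. -/
inductive Value : Type
  | inl
  | inr
  | base (n : ℕ) (b : ℕ)
deriving DecidableEq

/-- The (base) type of a value; `inl`/`inr` have type `ChoT`. -/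
def Value.ty : Value → BaseTy
  | .inl => .chot
  | .inr => .chot
  | .base _ b => .bt b

/-- Abstract functions used in local binders: we only know how to evaluate
them on lists of values and their return (base) type. -/
structure Func : Type where
  eval : List Value → Option Value
  retType : BaseTy

/-! ## Stores and local binders -/

/-- Stores: partial mappings from ports to some payload `V`. -/
abbrev Store (V : Type) := Port → Option V

def Store.single {V : Type} (x : Port) (v : V) : Store V :=
  fun p => if p = x then some v else none

def Store.upd {V : Type} (σ : Store V) (x : Port) (v : V) : Store V :=
  fun p => if p = x then some v else σ p

/-- The domain of a store. -/
def sdom {V : Type} (σ : Store V) : Set Port := {p | (σ p).isSome}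

/-- A local binder `y =σ̃= f(x̃)` (with its runtime queue of stores). -/
structure Binder (V : Type) : Type where
  out : Port
  queue : List (Store V)
  f : Func
  params : List Port

/-- Ports occurring (free) in a binder. -/
def Binder.fports {V : Type} (b : Binder V) : Set Port :=
  {b.out} ∪ {p | p ∈ b.params} ∪ {p | ∃ σ ∈ b.queue, p ∈ sdom σ}

/-- Ports occurring in a list of binders. -/
def fnL {V : Type} (L : List (Binder V)) : Set Port := {p | ∃ b ∈ L, p ∈ b.fports}

/-- Input rules for a single binder: rules LInpNew, LInpUpd, LInpDisc
(generic in the store payload). -/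
inductive BInp {V : Type} : Binder V → Port → V → Binder V → Prop
  | new (b : Binder V) (x : Port) (v : V) :
      x ∈ b.params → (∀ σ ∈ b.queue, x ∈ sdom σ) →
      BInp b x v { b with queue := b.queue ++ [Store.single x v] }
  | upd (b : Binder V) (x : Port) (v : V) (σs1 : List (Store V)) (σ : Store V)
      (σs2 : List (Store V)) :
      b.queue = σs1 ++ σ :: σs2 → x ∈ b.params →
      (∀ σ' ∈ σs1, x ∈ sdom σ') → x ∉ sdom σ →
      BInp b x v { b with queue := σs1 ++ σ.upd x v :: σs2 }
  | disc (b : Binder V) (x : Port) (v : V) :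
      x ∉ b.params → BInp b x v b

/-- Rule LInpList: all binders in a list react to an input. -/
inductive BsInp {V : Type} : List (Binder V) → Port → V → List (Binder V) → Prop
  | nil (x : Port) (v : V) : BsInp [] x v []
  | cons {b b' : Binder V} {bs bs' : List (Binder V)} {x : Port} {v : V} :
      BInp b x v b' → BsInp bs x v bs' → BsInp (b :: bs) x v (b' :: bs')

/-- Rule LOutLift: exactly one binder in a list performs an output
(the order of binders in `L` is abstracted from). -/
inductive BsOut {V W : Type} (step : Binder V → Port → W → Binder V → Prop) :
    List (Binder V) → Port → W → List (Binder V) → Prop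
  | head {b b' : Binder V} {bs : List (Binder V)} {y : Port} {v : W} :
      step b y v b' → BsOut step (b :: bs) y v (b' :: bs)
  | tail {b : Binder V} {bs bs' : List (Binder V)} {y : Port} {v : W} :
      BsOut step bs y v bs' → BsOut step (b :: bs) y v (b :: bs')

/-- Output rules LConst and LOut for a single (concrete) local binder. -/
inductive BOut : Binder Value → Port → Value → Binder Value → Prop
  | const (b : Binder Value) (v : Value) :
      b.params = [] → b.queue = [] → b.f.eval [] = some v →
      BOut b b.out v b
  | out (b : Binder Value) (v : Value) (σ : Store Value) (rest : List (Store Value))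
      (vs : List Value) :
      b.params ≠ [] → b.queue = σ :: rest →
      sdom σ = {x | x ∈ b.params} →
      b.params.mapM σ = some vs → b.f.eval vs = some v →
      BOut b b.out v { b with queue := rest }

/-- Labels of local binders (and of local types): `y!v` and `x?v`. -/
inductive BLabel : Type
  | out (y : Port) (v : Value)
  | inp (x : Port) (v : Value)
deriving DecidableEq

abbrev LBinders := List (Binder Value)

/-- The LTS of (lists of) local binders (Fig. 3 of the paper, rules
LConst/LOut/LInpNew/LInpUpd/LInpDisc/LOutLift/LInpList). -/
inductive LStep : LBinders → BLabel → LBinders → Prop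
  | out {L L' : LBinders} {y : Port} {v : Value} :
      BsOut BOut L y v L' → LStep L (.out y v) L'
  | inp {L L' : LBinders} {x : Port} {v : Value} :
      BsInp L x v L' → LStep L (.inp x v) L'

/-! ## Abstract local binders -/

/-- `η`: either a value (`inl`/`inr` are the relevant ones) or a base type
(including `ChoT`). -/
inductive Eta : Type
  | val (v : Value)
  | ty (B : BaseTy)
deriving DecidableEq

def Eta.toValue? : Eta → Option Value
  | .val v => some v
  | .ty _ => none

abbrev ALBinders := List (Binder Eta)

/-- Abstract output rules AConst, AOutVal, AOutType. -/
inductive AOut : Binder Eta → Port → Eta → Binder Eta → Prop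
  | const (b : Binder Eta) :
      b.params = [] → b.queue = [] →
      AOut b b.out (.ty b.f.retType) b
  | val (b : Binder Eta) (v : Value) (σ : Store Eta) (rest : List (Store Eta))
      (vs : List Value) :
      b.queue = σ :: rest → (∀ x ∈ b.params, x ∈ sdom σ) →
      b.params.mapM (fun x => (σ x).bind Eta.toValue?) = some vs →
      b.f.eval vs = some v →
      AOut b b.out (.val v) { b with queue := rest }
  | ty (b : Binder Eta) (σ : Store Eta) (rest : List (Store Eta)) :
      b.queue = σ :: rest → (∀ x ∈ b.params, x ∈ sdom σ) →
      (¬ ∃ vs v, b.params.mapM (fun x => (σ x).bind Eta.toValue?) = some vs ∧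
          b.f.eval vs = some v) →
      AOut b b.out (.ty b.f.retType) { b with queue := rest }

/-- Labels of abstract local binders: `y!η` and `x?η`. -/
inductive ALabel : Type
  | out (y : Port) (η : Eta)
  | inp (x : Port) (η : Eta)
deriving DecidableEq

/-- The LTS of abstract local binders (Fig. 13 of the paper). -/
inductive AStep : ALBinders → ALabel → ALBinders → Prop
  | out {L L' : ALBinders} {y : Port} {η : Eta} :
      BsOut AOut L y η L' → AStep L (.out y η) L'
  | inp {L L' : ALBinders} {x : Port} {η : Eta} :
      BsInp L x η L' → AStep L (.inp x η) L'

/-- Abstraction of a value: `inl`/`inr` are kept, other values are replaced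
by their base type. -/
def Value.toEta : Value → Eta
  | .inl => .val .inl
  | .inr => .val .inr
  | .base n b => .ty (.bt b)

def absStore (σ : Store Value) : Store Eta := fun p => (σ p).map Value.toEta

def absBinder (b : Binder Value) : Binder Eta :=
  ⟨b.out, b.queue.map absStore, b.f, b.params⟩

/-- The abstraction `abs(L)` of local binders. -/
def absL (L : LBinders) : ALBinders := L.map absBinder

/-- The abstraction `abs(λ)` of a local-binder label. -/
def absLabel : BLabel → ALabel
  | .out y v => .out y v.toEta
  | .inp x v => .inp x v.toEta

/-! ## Local types -/

inductive LType : Type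
  | out (z : Port) (B : BaseTy) (T : LType)      -- !z(B).T
  | inp (z : Port) (B : BaseTy) (T : LType)      -- ?z(B).T
  | cho (z : Port) (T1 T2 : LType)               -- z ◁ (T1, T2)
  | bra (z : Port) (T1 T2 : LType)               -- z ▷ (T1, T2)
  | mu (X : RecVar) (T : LType)
  | var (X : RecVar)
  | end_
deriving DecidableEq

def LType.subst : LType → RecVar → LType → LType
  | .out z B T, X, S => .out z B (T.subst X S)
  | .inp z B T, X, S => .inp z B (T.subst X S)
  | .cho z T1 T2, X, S => .cho z (T1.subst X S) (T2.subst X S)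
  | .bra z T1 T2, X, S => .bra z (T1.subst X S) (T2.subst X S)
  | .mu Y T, X, S => if Y = X then .mu Y T else .mu Y (T.subst X S)
  | .var Y, X, S => if Y = X then S else .var Y
  | .end_, _, _ => .end_

def LType.fv : LType → Set RecVar
  | .out _ _ T => T.fv
  | .inp _ _ T => T.fv
  | .cho _ T1 T2 => T1.fv ∪ T2.fv
  | .bra _ T1 T2 => T1.fv ∪ T2.fv
  | .mu X T => T.fv \ {X}
  | .var X => {X}
  | .end_ => ∅

def LType.ports : LType → Set Port
  | .out z _ T => {z} ∪ T.ports
  | .inp z _ T => {z} ∪ T.ports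
  | .cho z T1 T2 => {z} ∪ T1.ports ∪ T2.ports
  | .bra z T1 T2 => {z} ∪ T1.ports ∪ T2.ports
  | .mu _ T => T.ports
  | .var _ => ∅
  | .end_ => ∅

/-- Local type semantics (rules TOut/TInp/TChoL/TChoR/TBraL/TBraR/TRec). -/
inductive TStep : LType → BLabel → LType → Prop
  | out {y : Port} {B : BaseTy} {T : LType} {v : Value} :
      v.ty = B → TStep (.out y B T) (.out y v) T
  | inp {x : Port} {B : BaseTy} {T : LType} {v : Value} :
      v.ty = B → TStep (.inp x B T) (.inp x v) T
  | choL {y : Port} {T1 T2 : LType} : TStep (.cho y T1 T2) (.out y .inl) T1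
  | choR {y : Port} {T1 T2 : LType} : TStep (.cho y T1 T2) (.out y .inr) T2
  | braL {x : Port} {T1 T2 : LType} : TStep (.bra x T1 T2) (.inp x .inl) T1
  | braR {x : Port} {T1 T2 : LType} : TStep (.bra x T1 T2) (.inp x .inr) T2
  | unfold {X : RecVar} {T T' : LType} {l : BLabel} :
      TStep (T.subst X (.mu X T)) l T' → TStep (.mu X T) l T'

/-! ## Merge of local types -/

/-- The merge relation `T1 ⋈ T2 = T3` (Fig. 14 of the paper). -/
inductive Merge : LType → LType → LType → Prop
  | outL {T1 T2 T3 : LType} {z : Port} {B : BaseTy} :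
      Merge T1 T2 T3 → Merge (.out z B T1) T2 (.out z B T3)
  | outR {T1 T2 T3 : LType} {z : Port} {B : BaseTy} :
      Merge T1 T2 T3 → Merge T1 (.out z B T2) (.out z B T3)
  | inpL {T1 T2 T3 : LType} {z : Port} {B : BaseTy} :
      Merge T1 T2 T3 → Merge (.inp z B T1) T2 (.inp z B T3)
  | inpR {T1 T2 T3 : LType} {z : Port} {B : BaseTy} :
      Merge T1 T2 T3 → Merge T1 (.inp z B T2) (.inp z B T3)
  | choL {T1 T2 T3 T1' T2' : LType} {z : Port} :
      Merge T1 T3 T1' → Merge T2 T3 T2' →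
      Merge (.cho z T1 T2) T3 (.cho z T1' T2')
  | choR {T1 T2 T3 T2' T3' : LType} {z : Port} :
      Merge T1 T2 T2' → Merge T1 T3 T3' →
      Merge T1 (.cho z T2 T3) (.cho z T2' T3')
  | braL {T1 T2 T3 T1' T2' : LType} {z : Port} :
      Merge T1 T3 T1' → Merge T2 T3 T2' →
      Merge (.bra z T1 T2) T3 (.bra z T1' T2')
  | braR {T1 T2 T3 T2' T3' : LType} {z : Port} :
      Merge T1 T2 T2' → Merge T1 T3 T3' →
      Merge T1 (.bra z T2 T3) (.bra z T2' T3')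
  | endL {T : LType} : T.fv = ∅ → Merge .end_ T T
  | endR {T : LType} : T.fv = ∅ → Merge T .end_ T
  | unfold {T1 T2 T3 : LType} {X : RecVar} :
      Merge T1 T2 T3 → Merge (.mu X T1) (.mu X T2) (.mu X T3)
  | var {X : RecVar} : Merge (.var X) (.var X) (.var X)

/-- The merge operation is only defined when the two source types use
disjoint sets of ports. -/
def MergeD (T1 T2 T3 : LType) : Prop :=
  Merge T1 T2 T3 ∧ Disjoint T1.ports T2.ports

/-! ## Conformance -/

abbrev CEnv := RecVar → Option ALBinders

/-- Conformance `Γ ⊢ 𝓛 ≍ T` between abstract local binders and a local type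
(Fig. 15 of the paper). -/
inductive Conf : CEnv → ALBinders → LType → Prop
  | inp {Γ : CEnv} {L L' : ALBinders} {x : Port} {B : BaseTy} {T : LType} :
      AStep L (.inp x (.ty B)) L' → Conf Γ L' T → Conf Γ L (.inp x B T)
  | out {Γ : CEnv} {L L' : ALBinders} {y : Port} {B : BaseTy} {T : LType} :
      AStep L (.out y (.ty B)) L' → Conf Γ L' T → Conf Γ L (.out y B T)
  | bra {Γ : CEnv} {L L1 L2 : ALBinders} {x : Port} {T1 T2 : LType} :
      AStep L (.inp x (.val .inl)) L1 → Conf Γ L1 T1 →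
      AStep L (.inp x (.val .inr)) L2 → Conf Γ L2 T2 →
      Conf Γ L (.bra x T1 T2)
  | cho {Γ : CEnv} {L L' : ALBinders} {y : Port} {T1 T2 : LType} :
      AStep L (.out y (.ty .chot)) L' → Conf Γ L' T1 → Conf Γ L' T2 →
      Conf Γ L (.cho y T1 T2)
  | choL {Γ : CEnv} {L L' : ALBinders} {y : Port} {T1 T2 : LType} :
      AStep L (.out y (.val .inl)) L' → Conf Γ L' T1 → Conf Γ L (.cho y T1 T2)
  | choR {Γ : CEnv} {L L' : ALBinders} {y : Port} {T1 T2 : LType} :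
      AStep L (.out y (.val .inr)) L' → Conf Γ L' T2 → Conf Γ L (.cho y T1 T2)
  | unfold {Γ : CEnv} {L : ALBinders} {X : RecVar} {T : LType} :
      Conf (fun Y => if Y = X then some L else Γ Y) L T → Conf Γ L (.mu X T)
  | var {Γ : CEnv} {L : ALBinders} {X : RecVar} :
      Γ X = some L → Conf Γ L (.var X)
  | end_ {Γ : CEnv} {L : ALBinders} : Conf Γ L .end_

/-! ## Choreographies (protocols) -/

inductive Chor : Type
  | comm (p : Role) (l : MLabel) (qs : List Role) (G : Chor)          -- p -ℓ-> q̃; G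
  | commT (l : MLabel) (v : Value) (qs : List Role) (G : Chor)        -- in-transit value
  | sel (p : Role) (l : MLabel) (qs : List Role) (G1 G2 : Chor)       -- p -ℓ-> q̃ (G1,G2)
  | selT (l : MLabel) (v : Value) (qs : List Role) (G1 G2 : Chor)     -- in-transit choice
  | mu (X : RecVar) (G : Chor)
  | var (X : RecVar)
  | end_

def Chor.subst : Chor → RecVar → Chor → Chor
  | .comm p l qs G, X, S => .comm p l qs (G.subst X S)
  | .commT l v qs G, X, S => .commT l v qs (G.subst X S)
  | .sel p l qs G1 G2, X, S => .sel p l qs (G1.subst X S) (G2.subst X S)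
  | .selT l v qs G1 G2, X, S => .selT l v qs (G1.subst X S) (G2.subst X S)
  | .mu Y G, X, S => if Y = X then .mu Y G else .mu Y (G.subst X S)
  | .var Y, X, S => if Y = X then S else .var Y
  | .end_, _, _ => .end_

def Chor.roles : Chor → Set Role
  | .comm p _ qs G => {p} ∪ {q | q ∈ qs} ∪ G.roles
  | .commT _ _ qs G => {q | q ∈ qs} ∪ G.roles
  | .sel p _ qs G1 G2 => {p} ∪ {q | q ∈ qs} ∪ G1.roles ∪ G2.roles
  | .selT _ _ qs G1 G2 => {q | q ∈ qs} ∪ G1.roles ∪ G2.roles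
  | .mu _ G => G.roles
  | .var _ => ∅
  | .end_ => ∅

/-- Protocol labels `α ::= p:ℓ!v | p:ℓ?v`. -/
inductive GLabel : Type
  | snd (p : Role) (l : MLabel) (v : Value)
  | rcv (p : Role) (l : MLabel) (v : Value)
deriving DecidableEq

/-- The subject role of a protocol label. -/
def GLabel.role : GLabel → Role
  | .snd p _ _ => p
  | .rcv p _ _ => p

/-- The asynchronous LTS of protocols (Fig. 5, rules GSVal/GSChoice/GRVal/
GRVal2/GRChoice/GRChoice2/GRec/GConc1–5). -/
inductive GStep : Chor → GLabel → Chor → Prop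
  | sndVal {p : Role} {l : MLabel} {qs : List Role} {G : Chor} {v : Value} :
      GStep (.comm p l qs G) (.snd p l v) (.commT l v qs G)
  | sndCho {p : Role} {l : MLabel} {qs : List Role} {G1 G2 : Chor} {v : Value} :
      v = Value.inl ∨ v = Value.inr →
      GStep (.sel p l qs G1 G2) (.snd p l v) (.selT l v qs G1 G2)
  | rcvVal {q : Role} {l : MLabel} {qs : List Role} {G : Chor} {v : Value} :
      q ∈ qs → 2 ≤ qs.length →
      GStep (.commT l v qs G) (.rcv q l v) (.commT l v (qs.erase q) G)
  | rcvVal1 {q : Role} {l : MLabel} {G : Chor} {v : Value} :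
      GStep (.commT l v [q] G) (.rcv q l v) G
  | rcvCho {q : Role} {l : MLabel} {qs : List Role} {G1 G2 : Chor} {v : Value} :
      q ∈ qs → 2 ≤ qs.length →
      GStep (.selT l v qs G1 G2) (.rcv q l v) (.selT l v (qs.erase q) G1 G2)
  | rcvChoL {q : Role} {l : MLabel} {G1 G2 : Chor} :
      GStep (.selT l .inl [q] G1 G2) (.rcv q l .inl) G1
  | rcvChoR {q : Role} {l : MLabel} {G1 G2 : Chor} :
      GStep (.selT l .inr [q] G1 G2) (.rcv q l .inr) G2
  | unfold {X : RecVar} {G G' : Chor} {α : GLabel} :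
      GStep (G.subst X (.mu X G)) α G' → GStep (.mu X G) α G'
  | conc1 {p : Role} {l : MLabel} {qs : List Role} {G G' : Chor} {α : GLabel} :
      GStep G α G' → α.role ≠ p → α.role ∉ qs →
      GStep (.comm p l qs G) α (.comm p l qs G')
  | conc2 {p : Role} {l : MLabel} {qs : List Role} {G1 G2 G1' G2' : Chor} {α : GLabel} :
      GStep G1 α G1' → GStep G2 α G2' → α.role ≠ p → α.role ∉ qs →
      GStep (.sel p l qs G1 G2) α (.sel p l qs G1' G2')
  | conc3 {l : MLabel} {v : Value} {qs : List Role} {G G' : Chor} {α : GLabel} :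
      GStep G α G' → α.role ∉ qs →
      GStep (.commT l v qs G) α (.commT l v qs G')
  | conc4 {l : MLabel} {qs : List Role} {G1 G2 G1' : Chor} {α : GLabel} :
      GStep G1 α G1' → α.role ∉ qs →
      GStep (.selT l .inl qs G1 G2) α (.selT l .inl qs G1' G2)
  | conc5 {l : MLabel} {qs : List Role} {G1 G2 G2' : Chor} {α : GLabel} :
      GStep G2 α G2' → α.role ∉ qs →
      GStep (.selT l .inr qs G1 G2) α (.selT l .inr qs G1 G2')

/-! ## Components -/

/-- Connection binder `ℓ : q.x <- p.y`. -/
structure CBinder : Type where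
  l : MLabel
  rq : Role
  x : Port
  rp : Role
  y : Port
deriving DecidableEq

/-- Forwarder `z <- w` (`dst <- src`). -/
structure Fwd : Type where
  dst : Port
  src : Port
deriving DecidableEq

inductive Component : Type
  | base (ins outs : List Port) (L : LBinders)
  | comp (ins outs : List Port) (D : List CBinder) (r : Role) (F : List Fwd)
      (R : List (Role × Component)) (G : Chor)

def Component.ins : Component → List Port
  | .base ins _ _ => ins
  | .comp ins _ _ _ _ _ _ => ins

def Component.outs : Component → List Port
  | .base _ outs _ => outs
  | .comp _ outs _ _ _ _ _ => outs

/-- Component labels `λ ::= y!v | x?v | τ`. -/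
inductive CLabel : Type
  | out (y : Port) (v : Value)
  | inp (x : Port) (v : Value)
  | tau
deriving DecidableEq

def BLabel.toC : BLabel → CLabel
  | .out y v => .out y v
  | .inp x v => .inp x v

/-- Updating a role assignment list: `R` contains `p = C` which becomes
`p = C'` (the order of role assignments is abstracted from). -/
inductive RUpd : List (Role × Component) → Role → Component → Component →
    List (Role × Component) → Prop
  | head {p : Role} {C C' : Component} {R : List (Role × Component)} :
      RUpd ((p, C) :: R) p C C' ((p, C') :: R)
  | tail {p : Role} {C C' : Component} {e : Role × Component}
      {R R' : List (Role × Component)} :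
      RUpd R p C C' R' → RUpd (e :: R) p C C' (e :: R')

/-- The LTS of GC components (Figs. 2 and 4 of the paper). -/
inductive CStep : Component → CLabel → Component → Prop
  | outBase {ins outs : List Port} {L L' : LBinders} {y : Port} {v : Value} :
      LStep L (.out y v) L' → y ∈ outs →
      CStep (.base ins outs L) (.out y v) (.base ins outs L')
  | inpBase {ins outs : List Port} {L L' : LBinders} {x : Port} {v : Value} :
      LStep L (.inp x v) L' → x ∈ ins →
      CStep (.base ins outs L) (.inp x v) (.base ins outs L')
  | outChor {ins outs : List Port} {D : List CBinder} {r : Role} {F : List Fwd}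
      {R R' : List (Role × Component)} {G G' : Chor} {C C' : Component}
      {p q : Role} {l : MLabel} {z u : Port} {v : Value} :
      CStep C (.out u v) C' →
      (⟨l, q, z, p, u⟩ : CBinder) ∈ D →
      GStep G (.snd p l v) G' →
      RUpd R p C C' R' →
      CStep (.comp ins outs D r F R G) .tau (.comp ins outs D r F R' G')
  | inpChor {ins outs : List Port} {D : List CBinder} {r : Role} {F : List Fwd}
      {R R' : List (Role × Component)} {G G' : Chor} {C C' : Component}
      {p q : Role} {l : MLabel} {z u : Port} {v : Value} :
      CStep C (.inp z v) C' →
      (⟨l, q, z, p, u⟩ : CBinder) ∈ D →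
      GStep G (.rcv q l v) G' →
      RUpd R q C C' R' →
      CStep (.comp ins outs D r F R G) .tau (.comp ins outs D r F R' G')
  | internal {ins outs : List Port} {D : List CBinder} {r s : Role} {F : List Fwd}
      {R R' : List (Role × Component)} {G : Chor} {C C' : Component} :
      CStep C .tau C' → RUpd R s C C' R' →
      CStep (.comp ins outs D r F R G) .tau (.comp ins outs D r F R' G)
  | outComp {ins outs : List Port} {D : List CBinder} {r : Role} {F : List Fwd}
      {R R' : List (Role × Component)} {G : Chor} {C C' : Component}
      {y z : Port} {v : Value} :
      CStep C (.out z v) C' → RUpd R r C C' R' →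
      (⟨y, z⟩ : Fwd) ∈ F → y ∈ outs →
      CStep (.comp ins outs D r F R G) (.out y v) (.comp ins outs D r F R' G)
  | inpComp {ins outs : List Port} {D : List CBinder} {r : Role} {F : List Fwd}
      {R R' : List (Role × Component)} {G : Chor} {C C' : Component}
      {x z : Port} {v : Value} :
      CStep C (.inp z v) C' → RUpd R r C C' R' →
      (⟨z, x⟩ : Fwd) ∈ F → x ∈ ins →
      CStep (.comp ins outs D r F R G) (.inp x v) (.comp ins outs D r F R' G)

/-- Zero or more τ-steps of a component. -/
def CTauStar : Component → Component → Prop :=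
  Relation.ReflTransGen (fun C C' => CStep C .tau C')

/-! ## Well-formedness of components -/

def Chor.wf : Chor → Prop
  | .comm p _ qs G => p ∉ qs ∧ G.wf
  | .commT _ _ _ G => G.wf
  | .sel p _ qs G1 G2 => p ∉ qs ∧ G1.wf ∧ G2.wf
  | .selT _ _ _ G1 G2 => G1.wf ∧ G2.wf
  | .mu _ G => G.wf
  | .var _ => True
  | .end_ => True

/-- Well-formed components: (1) input and output ports disjoint; (2) each
port defined at most once in local binders; (3) in choreographies, the sender
is never among the receivers; (4) forwarders defined for distinct port
identifiers; (5) receiver ports of connection binders used at most once and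
sender ports always used with the same message label. -/
inductive WF : Component → Prop
  | base {ins outs : List Port} {L : LBinders} :
      (∀ p, ¬(p ∈ ins ∧ p ∈ outs)) →
      (L.map Binder.out).Nodup →
      WF (.base ins outs L)
  | comp {ins outs : List Port} {D : List CBinder} {r : Role} {F : List Fwd}
      {R : List (Role × Component)} {G : Chor} :
      (∀ p, ¬(p ∈ ins ∧ p ∈ outs)) →
      G.wf →
      (F.map Fwd.dst).Nodup →
      ((D.map (fun d => (d.rq, d.x))).Nodup) →
      (∀ d ∈ D, ∀ d' ∈ D, d.rp = d'.rp → d.y = d'.y → d.l = d'.l) →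
      (∀ e ∈ R, WF e.2) →
      WF (.comp ins outs D r F R G)

/-! ## Protocol projection, forwarder renaming, interface check, typing -/

/-- The map Δ from message labels to the base types of communicated values. -/
abbrev DMap := MLabel → Option BaseTy

/-- Protocol projection `G ↾ (r, D, Δ)` (Fig. 11 of the paper), as a partial
function presented relationally. -/
inductive Proj : Chor → Role → List CBinder → DMap → LType → Prop
  | commSnd {p q : Role} {l : MLabel} {qs : List Role} {G : Chor}
      {D : List CBinder} {Δ : DMap} {w z : Port} {B : BaseTy} {T : LType} :
      (⟨l, q, w, p, z⟩ : CBinder) ∈ D → Δ l = some B →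
      Proj G p D Δ T → Proj (.comm p l qs G) p D Δ (.out z B T)
  | commRcv {p q : Role} {l : MLabel} {qs : List Role} {G : Chor}
      {D : List CBinder} {Δ : DMap} {w z : Port} {B : BaseTy} {T : LType} :
      q ∈ qs → (⟨l, q, w, p, z⟩ : CBinder) ∈ D → Δ l = some B →
      Proj G q D Δ T → Proj (.comm p l qs G) q D Δ (.inp w B T)
  | commOther {p r : Role} {l : MLabel} {qs : List Role} {G : Chor}
      {D : List CBinder} {Δ : DMap} {T : LType} :
      r ≠ p → r ∉ qs → Proj G r D Δ T → Proj (.comm p l qs G) r D Δ T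
  | commTRcv {p q : Role} {l : MLabel} {v : Value} {qs : List Role} {G : Chor}
      {D : List CBinder} {Δ : DMap} {w z : Port} {T : LType} :
      q ∈ qs → (⟨l, q, w, p, z⟩ : CBinder) ∈ D →
      Proj G q D Δ T → Proj (.commT l v qs G) q D Δ (.inp w v.ty T)
  | commTOther {r : Role} {l : MLabel} {v : Value} {qs : List Role} {G : Chor}
      {D : List CBinder} {Δ : DMap} {T : LType} :
      r ∉ qs → Proj G r D Δ T → Proj (.commT l v qs G) r D Δ T
  | selSnd {p q : Role} {l : MLabel} {qs : List Role} {G1 G2 : Chor}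
      {D : List CBinder} {Δ : DMap} {w z : Port} {T1 T2 : LType} :
      (⟨l, q, w, p, z⟩ : CBinder) ∈ D →
      Proj G1 p D Δ T1 → Proj G2 p D Δ T2 →
      Proj (.sel p l qs G1 G2) p D Δ (.cho z T1 T2)
  | selRcv {p q : Role} {l : MLabel} {qs : List Role} {G1 G2 : Chor}
      {D : List CBinder} {Δ : DMap} {w z : Port} {T1 T2 : LType} :
      q ∈ qs → (⟨l, q, w, p, z⟩ : CBinder) ∈ D →
      Proj G1 q D Δ T1 → Proj G2 q D Δ T2 →
      Proj (.sel p l qs G1 G2) q D Δ (.bra w T1 T2)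
  | selOther {p r : Role} {l : MLabel} {qs : List Role} {G1 G2 : Chor}
      {D : List CBinder} {Δ : DMap} {T : LType} :
      r ≠ p → r ∉ qs → Proj G1 r D Δ T → Proj G2 r D Δ T →
      Proj (.sel p l qs G1 G2) r D Δ T
  | selTRcv {p q : Role} {l : MLabel} {v : Value} {qs : List Role} {G1 G2 : Chor}
      {D : List CBinder} {Δ : DMap} {w z : Port} {T1 T2 : LType} :
      q ∈ qs → (⟨l, q, w, p, z⟩ : CBinder) ∈ D → v.ty = .chot →
      Proj G1 q D Δ T1 → Proj G2 q D Δ T2 →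
      Proj (.selT l v qs G1 G2) q D Δ (.bra w T1 T2)
  | selTL {r : Role} {l : MLabel} {qs : List Role} {G1 G2 : Chor}
      {D : List CBinder} {Δ : DMap} {T : LType} :
      r ∉ qs → Proj G1 r D Δ T → Proj (.selT l .inl qs G1 G2) r D Δ T
  | selTR {r : Role} {l : MLabel} {qs : List Role} {G1 G2 : Chor}
      {D : List CBinder} {Δ : DMap} {T : LType} :
      r ∉ qs → Proj G2 r D Δ T → Proj (.selT l .inr qs G1 G2) r D Δ T
  | muIn {r : Role} {X : RecVar} {G : Chor} {D : List CBinder} {Δ : DMap}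
      {T : LType} :
      r ∈ G.roles → Proj G r D Δ T → Proj (.mu X G) r D Δ (.mu X T)
  | muOut {r : Role} {X : RecVar} {G : Chor} {D : List CBinder} {Δ : DMap} :
      r ∉ G.roles → Proj (.mu X G) r D Δ .end_
  | var {r : Role} {X : RecVar} {D : List CBinder} {Δ : DMap} :
      Proj (.var X) r D Δ (.var X)
  | end_ {r : Role} {D : List CBinder} {Δ : DMap} :
      Proj .end_ r D Δ .end_

/-- Forwarder renaming `ren(T, F, x̃, ỹ)` (Fig. 12 of the paper). -/
inductive Ren : LType → List Fwd → List Port → List Port → LType → Prop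
  | inp {F : List Fwd} {xs ys : List Port} {x z : Port} {B : BaseTy} {T T' : LType} :
      x ∈ xs → (⟨z, x⟩ : Fwd) ∈ F → Ren T F xs ys T' →
      Ren (.inp x B T) F xs ys (.inp z B T')
  | out {F : List Fwd} {xs ys : List Port} {y z : Port} {B : BaseTy} {T T' : LType} :
      y ∈ ys → (⟨y, z⟩ : Fwd) ∈ F → Ren T F xs ys T' →
      Ren (.out y B T) F xs ys (.out z B T')
  | bra {F : List Fwd} {xs ys : List Port} {x z : Port} {T1 T2 T1' T2' : LType} :
      x ∈ xs → (⟨z, x⟩ : Fwd) ∈ F →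
      Ren T1 F xs ys T1' → Ren T2 F xs ys T2' →
      Ren (.bra x T1 T2) F xs ys (.bra z T1' T2')
  | cho {F : List Fwd} {xs ys : List Port} {y z : Port} {T1 T2 T1' T2' : LType} :
      y ∈ ys → (⟨y, z⟩ : Fwd) ∈ F →
      Ren T1 F xs ys T1' → Ren T2 F xs ys T2' →
      Ren (.cho y T1 T2) F xs ys (.cho z T1' T2')
  | unfold {F : List Fwd} {xs ys : List Port} {X : RecVar} {T T' : LType} :
      Ren T F xs ys T' → Ren (.mu X T) F xs ys (.mu X T')
  | var {F : List Fwd} {xs ys : List Port} {X : RecVar} :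
      Ren (.var X) F xs ys (.var X)
  | end_ {F : List Fwd} {xs ys : List Port} :
      Ren .end_ F xs ys .end_

/-- Interface check `x̃; ỹ ⊢ T` (Fig. 13 of the paper). -/
inductive Iface : List Port → List Port → LType → Prop
  | inp {xs ys : List Port} {z : Port} {B : BaseTy} {T : LType} :
      z ∈ xs → Iface xs ys T → Iface xs ys (.inp z B T)
  | out {xs ys : List Port} {z : Port} {B : BaseTy} {T : LType} :
      z ∈ ys → Iface xs ys T → Iface xs ys (.out z B T)
  | bra {xs ys : List Port} {z : Port} {T1 T2 : LType} :
      z ∈ xs → Iface xs ys T1 → Iface xs ys T2 → Iface xs ys (.bra z T1 T2)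
  | cho {xs ys : List Port} {z : Port} {T1 T2 : LType} :
      z ∈ ys → Iface xs ys T1 → Iface xs ys T2 → Iface xs ys (.cho z T1 T2)
  | unfold {xs ys : List Port} {X : RecVar} {T : LType} :
      Iface xs ys T → Iface xs ys (.mu X T)
  | var {xs ys : List Port} {X : RecVar} : Iface xs ys (.var X)
  | end_ {xs ys : List Port} : Iface xs ys .end_

/-- The empty conformance environment. -/
def emptyCEnv : CEnv := fun _ => none

mutual
  /-- The typing judgement `C : T` (Fig. 10 of the paper, rules TBaseC and
  TCompC). -/
  inductive Typing : Component → LType → Prop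
    | base {ins outs : List Port} {L : LBinders} {T : LType} :
        Conf emptyCEnv (absL L) T → Iface ins outs T →
        Typing (.base ins outs L) T
    | comp {ins outs : List Port} {D : List CBinder} {r : Role} {F : List Fwd}
        {R : List (Role × Component)} {G : Chor} {Δ : DMap}
        {T T0 T1 Tr : LType} {ps : List Role} {env : List (Role × LType)} :
        Proj G r D Δ T0 →
        Ren T F ins outs T1 →
        MergeD T0 T1 Tr →
        (∀ q ∈ G.roles, q ∈ R.map Prod.fst) →
        R.map Prod.fst = r :: ps →
        List.Forall₂ (fun (p : Role) (e : Role × LType) =>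
          e.1 = p ∧ Proj G p D Δ e.2) ps env →
        RTyping ((r, Tr) :: env) R →
        Typing (.comp ins outs D r F R G) T

  /-- Typing of role assignments (rules TRole and TRoleL). -/
  inductive RTyping : List (Role × LType) → List (Role × Component) → Prop
    | single {p : Role} {C : Component} {T : LType} :
        Typing C T → RTyping [(p, T)] [(p, C)]
    | cons {p : Role} {C : Component} {T : LType} {env : List (Role × LType)}
        {R : List (Role × Component)} :
        Typing C T → RTyping env R → RTyping ((p, T) :: env) ((p, C) :: R)
end

/-! ## Target process model -/

/-- Objects: variables or values. -/
inductive Obj : Type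
  | ovar (a : VarName)
  | oval (v : Value)
deriving DecidableEq

inductive Proc : Type
  | nil
  | par (P Q : Proc)
  | res (z : Port) (P : Proc)
  | mu (X : RecVar) (P : Proc)
  | pvar (X : RecVar)
  | out (z : Port) (o : Obj) (P : Proc)
  | inp (z : Port) (a : VarName) (P : Proc)
  | bra (z : Port) (P Q : Proc)
  | box (L : LBinders)
  | fwdO (z w : Port) (P : Proc)   -- output forwarder (z ↞ w)
  | fwdI (z w : Port) (P : Proc)   -- input forwarder (z ↢ w)

/-- Substitution of a value for a variable. -/
def Proc.substV : Proc → VarName → Value → Proc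
  | .nil, _, _ => .nil
  | .par P Q, a, v => .par (P.substV a v) (Q.substV a v)
  | .res z P, a, v => .res z (P.substV a v)
  | .mu X P, a, v => .mu X (P.substV a v)
  | .pvar X, _, _ => .pvar X
  | .out z (.ovar b) P, a, v =>
      .out z (if b = a then .oval v else .ovar b) (P.substV a v)
  | .out z (.oval w) P, a, v => .out z (.oval w) (P.substV a v)
  | .inp z b P, a, v => if b = a then .inp z b P else .inp z b (P.substV a v)
  | .bra z P Q, a, v => .bra z (P.substV a v) (Q.substV a v)
  | .box L, _, _ => .box L
  | .fwdO z w P, a, v => .fwdO z w (P.substV a v)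
  | .fwdI z w P, a, v => .fwdI z w (P.substV a v)

/-- Substitution of a process for a recursion variable. -/
def Proc.substP : Proc → RecVar → Proc → Proc
  | .nil, _, _ => .nil
  | .par P Q, X, S => .par (P.substP X S) (Q.substP X S)
  | .res z P, X, S => .res z (P.substP X S)
  | .mu Y P, X, S => if Y = X then .mu Y P else .mu Y (P.substP X S)
  | .pvar Y, X, S => if Y = X then S else .pvar Y
  | .out z o P, X, S => .out z o (P.substP X S)
  | .inp z a P, X, S => .inp z a (P.substP X S)
  | .bra z P Q, X, S => .bra z (P.substP X S) (Q.substP X S)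
  | .box L, _, _ => .box L
  | .fwdO z w P, X, S => .fwdO z w (P.substP X S)
  | .fwdI z w P, X, S => .fwdI z w (P.substP X S)

/-- Free ports of a process. -/
def Proc.fn : Proc → Set Port
  | .nil => ∅
  | .par P Q => P.fn ∪ Q.fn
  | .res z P => P.fn \ {z}
  | .mu _ P => P.fn
  | .pvar _ => ∅
  | .out z _ P => {z} ∪ P.fn
  | .inp z _ P => {z} ∪ P.fn
  | .bra z P Q => {z} ∪ P.fn ∪ Q.fn
  | .box L => fnL L
  | .fwdO z w P => {z} ∪ {w} ∪ P.fn
  | .fwdI z w P => {z} ∪ {w} ∪ P.fn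

/-- Process labels: the component labels plus the overlined variants
originating from communication primitives. -/
inductive PLabel : Type
  | out (y : Port) (v : Value)
  | inp (x : Port) (v : Value)
  | tau
  | cout (y : Port) (v : Value)   -- overline(y!v)
  | cinp (x : Port) (v : Value)   -- overline(x?v)
deriving DecidableEq

def PLabel.bar : PLabel → PLabel
  | .out y v => .cout y v
  | .inp x v => .cinp x v
  | .cout y v => .out y v
  | .cinp x v => .inp x v
  | .tau => .tau

/-- The subject port of a process label (τ has none). -/
def PLabel.subj : PLabel → Option Port
  | .out y _ => some y
  | .inp x _ => some x
  | .cout y _ => some y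
  | .cinp x _ => some x
  | .tau => none

def BLabel.toP : BLabel → PLabel
  | .out y v => .out y v
  | .inp x v => .inp x v

/-- The LTS of the target process model (Fig. 9 of the paper, together with
the local binder rules for queues). -/
inductive PStep : Proc → PLabel → Proc → Prop
  | box {L L' : LBinders} {bl : BLabel} :
      LStep L bl L' → PStep (.box L) bl.toP (.box L')
  | res {P P' : Proc} {z : Port} {lab : PLabel} :
      PStep P lab P' → lab.subj ≠ some z → PStep (.res z P) lab (.res z P')
  | parL {P P' Q : Proc} {lab : PLabel} :
      PStep P lab P' → PStep (.par P Q) lab (.par P' Q)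
  | parR {P Q Q' : Proc} {lab : PLabel} :
      PStep Q lab Q' → PStep (.par P Q) lab (.par P Q')
  | com {P P' Q Q' : Proc} {lab : PLabel} :
      PStep P lab P' → PStep Q lab.bar Q' → lab ≠ .tau →
      PStep (.par P Q) .tau (.par P' Q')
  | unfold {P Q : Proc} {X : RecVar} {lab : PLabel} :
      PStep (P.substP X (.mu X P)) lab Q → PStep (.mu X P) lab Q
  | fwdI1 {P P' : Proc} {z w : Port} {lab : PLabel} :
      PStep P lab P' → lab.subj ≠ some z → lab.subj ≠ some w →
      PStep (.fwdI z w P) lab (.fwdI z w P')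
  | fwdO1 {P P' : Proc} {z w : Port} {lab : PLabel} :
      PStep P lab P' → lab.subj ≠ some z → lab.subj ≠ some w →
      PStep (.fwdO z w P) lab (.fwdO z w P')
  | fwdInp {P P' : Proc} {z w : Port} {v : Value} :
      PStep P (.inp w v) P' → PStep (.fwdI z w P) (.inp z v) (.fwdI z w P')
  | fwdOut {P P' : Proc} {z w : Port} {v : Value} :
      PStep P (.out w v) P' → PStep (.fwdO z w P) (.out z v) (.fwdO z w P')
  | fwdInp2 {P P' : Proc} {z w : Port} {v : Value} :
      PStep P (.cinp w v) P' → PStep (.fwdI z w P) (.cinp z v) (.fwdI z w P')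
  | fwdOut2 {P P' : Proc} {z w : Port} {v : Value} :
      PStep P (.cout w v) P' → PStep (.fwdO z w P) (.cout z v) (.fwdO z w P')
  | out {P : Proc} {z : Port} {v : Value} :
      PStep (.out z (.oval v) P) (.cout z v) P
  | inp {P : Proc} {z : Port} {a : VarName} {v : Value} :
      PStep (.inp z a P) (.cinp z v) (P.substV a v)
  | choL {P Q : Proc} {z : Port} :
      PStep (.bra z P Q) (.cinp z .inl) P
  | choR {P Q : Proc} {z : Port} :
      PStep (.bra z P Q) (.cinp z .inr) Q

/-- Zero or more τ-steps of a process. -/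
def PTauStar : Proc → Proc → Prop :=
  Relation.ReflTransGen (fun P Q => PStep P .tau Q)

/-- Structural congruence: the standard one, extended with the swapping of
forwarders whose names are distinct. -/
inductive SC : Proc → Proc → Prop
  | refl (P : Proc) : SC P P
  | symm {P Q : Proc} : SC P Q → SC Q P
  | trans {P Q R : Proc} : SC P Q → SC Q R → SC P R
  | par {P P' Q Q' : Proc} : SC P P' → SC Q Q' → SC (.par P Q) (.par P' Q')
  | res {P Q : Proc} {z : Port} : SC P Q → SC (.res z P) (.res z Q)
  | mu {P Q : Proc} {X : RecVar} : SC P Q → SC (.mu X P) (.mu X Q)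
  | out {P Q : Proc} {z : Port} {o : Obj} : SC P Q → SC (.out z o P) (.out z o Q)
  | inp {P Q : Proc} {z : Port} {a : VarName} : SC P Q → SC (.inp z a P) (.inp z a Q)
  | bra {P P' Q Q' : Proc} {z : Port} :
      SC P P' → SC Q Q' → SC (.bra z P Q) (.bra z P' Q')
  | fwdO {P Q : Proc} {z w : Port} : SC P Q → SC (.fwdO z w P) (.fwdO z w Q)
  | fwdI {P Q : Proc} {z w : Port} : SC P Q → SC (.fwdI z w P) (.fwdI z w Q)
  | parComm (P Q : Proc) : SC (.par P Q) (.par Q P)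
  | parAssoc (P Q R : Proc) : SC (.par (.par P Q) R) (.par P (.par Q R))
  | parNil (P : Proc) : SC (.par P .nil) P
  | resRes (z w : Port) (P : Proc) : SC (.res z (.res w P)) (.res w (.res z P))
  | resNil (z : Port) : SC (.res z .nil) .nil
  | scopeExt {P Q : Proc} {z : Port} :
      z ∉ Q.fn → SC (.par (.res z P) Q) (.res z (.par P Q))
  | fwdSwapII {P : Proc} {z w z' w' : Port} :
      z ≠ z' → z ≠ w' → w ≠ z' → w ≠ w' →
      SC (.fwdI z w (.fwdI z' w' P)) (.fwdI z' w' (.fwdI z w P))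
  | fwdSwapOO {P : Proc} {z w z' w' : Port} :
      z ≠ z' → z ≠ w' → w ≠ z' → w ≠ w' →
      SC (.fwdO z w (.fwdO z' w' P)) (.fwdO z' w' (.fwdO z w P))
  | fwdSwapIO {P : Proc} {z w z' w' : Port} :
      z ≠ z' → z ≠ w' → w ≠ z' → w ≠ w' →
      SC (.fwdI z w (.fwdO z' w' P)) (.fwdO z' w' (.fwdI z w P))

/-! ## Encoding of choreographies and components -/

/-- The injective mapping γ from role-port pairs and role-label pairs to
ports of the target model. -/
structure GMap : Type where
  toFun : (Role × Port) ⊕ (Role × MLabel) → Port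
  inj : Function.Injective toFun

/-- `γ(r, z)` for a role-port pair. -/
def GMap.p (γ : GMap) (r : Role) (z : Port) : Port := γ.toFun (.inl (r, z))

/-- `γ(r, ℓ)` for a role-label pair. -/
def GMap.l (γ : GMap) (r : Role) (l : MLabel) : Port := γ.toFun (.inr (r, l))

/-- A fixed variable name used by the encoding of choreographies. -/
def encVar : VarName := 0

/-- The encoding `⟦G⟧_{r, D, γ}` of a choreography for a role (Fig. 7 of the
paper), as a partial function presented relationally. -/
inductive GEnc : Chor → Role → List CBinder → GMap → Proc → Prop
  | commSnd {p q : Role} {l : MLabel} {qs : List Role} {G : Chor}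
      {D : List CBinder} {γ : GMap} {w z : Port} {P : Proc} :
      (⟨l, q, w, p, z⟩ : CBinder) ∈ D →
      GEnc G p D γ P →
      GEnc (.comm p l qs G) p D γ
        (.inp (γ.p p z) encVar (.out (γ.l p l) (.ovar encVar) P))
  | commRcv {p q : Role} {l : MLabel} {qs : List Role} {G : Chor}
      {D : List CBinder} {γ : GMap} {w z : Port} {P : Proc} :
      q ∈ qs → (⟨l, q, w, p, z⟩ : CBinder) ∈ D →
      GEnc G q D γ P →
      GEnc (.comm p l qs G) q D γ
        (.inp (γ.l q l) encVar (.out (γ.p q w) (.ovar encVar) P))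
  | commOther {p r : Role} {l : MLabel} {qs : List Role} {G : Chor}
      {D : List CBinder} {γ : GMap} {P : Proc} :
      r ≠ p → r ∉ qs → GEnc G r D γ P → GEnc (.comm p l qs G) r D γ P
  | commTRcv {p q : Role} {l : MLabel} {v : Value} {qs : List Role} {G : Chor}
      {D : List CBinder} {γ : GMap} {w z : Port} {P : Proc} :
      q ∈ qs → (⟨l, q, w, p, z⟩ : CBinder) ∈ D →
      GEnc G q D γ P →
      GEnc (.commT l v qs G) q D γ
        (.inp (γ.l q l) encVar (.out (γ.p q w) (.ovar encVar) P))
  | commTOther {r : Role} {l : MLabel} {v : Value} {qs : List Role} {G : Chor}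
      {D : List CBinder} {γ : GMap} {P : Proc} :
      r ∉ qs → GEnc G r D γ P → GEnc (.commT l v qs G) r D γ P
  | selSnd {p q : Role} {l : MLabel} {qs : List Role} {G1 G2 : Chor}
      {D : List CBinder} {γ : GMap} {w z : Port} {P1 P2 : Proc} :
      (⟨l, q, w, p, z⟩ : CBinder) ∈ D →
      GEnc G1 p D γ P1 → GEnc G2 p D γ P2 →
      GEnc (.sel p l qs G1 G2) p D γ
        (.bra (γ.p p z) (.out (γ.l p l) (.oval .inl) P1)
          (.out (γ.l p l) (.oval .inr) P2))
  | selRcv {p q : Role} {l : MLabel} {qs : List Role} {G1 G2 : Chor}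
      {D : List CBinder} {γ : GMap} {w z : Port} {P1 P2 : Proc} :
      q ∈ qs → (⟨l, q, w, p, z⟩ : CBinder) ∈ D →
      GEnc G1 q D γ P1 → GEnc G2 q D γ P2 →
      GEnc (.sel p l qs G1 G2) q D γ
        (.bra (γ.l q l) (.out (γ.p q w) (.oval .inl) P1)
          (.out (γ.p q w) (.oval .inr) P2))
  | selOther {p r : Role} {l : MLabel} {qs : List Role} {G1 G2 : Chor}
      {D : List CBinder} {γ : GMap} {P : Proc} :
      r ≠ p → r ∉ qs → GEnc G1 r D γ P → GEnc G2 r D γ P →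
      GEnc (.sel p l qs G1 G2) r D γ P
  | selTRcv {p q : Role} {l : MLabel} {v : Value} {qs : List Role} {G1 G2 : Chor}
      {D : List CBinder} {γ : GMap} {w z : Port} {P1 P2 : Proc} :
      q ∈ qs → (⟨l, q, w, p, z⟩ : CBinder) ∈ D →
      GEnc G1 q D γ P1 → GEnc G2 q D γ P2 →
      GEnc (.selT l v qs G1 G2) q D γ
        (.bra (γ.l q l) (.out (γ.p q w) (.oval .inl) P1)
          (.out (γ.p q w) (.oval .inr) P2))
  | selTL {r : Role} {l : MLabel} {qs : List Role} {G1 G2 : Chor}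
      {D : List CBinder} {γ : GMap} {P : Proc} :
      r ∉ qs → GEnc G1 r D γ P → GEnc (.selT l .inl qs G1 G2) r D γ P
  | selTR {r : Role} {l : MLabel} {qs : List Role} {G1 G2 : Chor}
      {D : List CBinder} {γ : GMap} {P : Proc} :
      r ∉ qs → GEnc G2 r D γ P → GEnc (.selT l .inr qs G1 G2) r D γ P
  | muIn {r : Role} {X : RecVar} {G : Chor} {D : List CBinder} {γ : GMap}
      {P : Proc} :
      r ∈ G.roles → GEnc G r D γ P → GEnc (.mu X G) r D γ (.mu X P)
  | muOut {r : Role} {X : RecVar} {G : Chor} {D : List CBinder} {γ : GMap} :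
      r ∉ G.roles → GEnc (.mu X G) r D γ .nil
  | var {r : Role} {X : RecVar} {D : List CBinder} {γ : GMap} :
      GEnc (.var X) r D γ (.pvar X)
  | end_ {r : Role} {D : List CBinder} {γ : GMap} :
      GEnc .end_ r D γ .nil

/-- The identity function used by the monitor queues. -/
def idFunc : Func :=
  ⟨fun vs => match vs with | [v] => some v | _ => none, .chot⟩

/-- The monitor queues `Q(D, γ)`: one queue per connection binder. -/
def monQueues (D : List CBinder) (γ : GMap) : LBinders :=
  D.map (fun d => ⟨γ.l d.rq d.l, [], idFunc, [γ.l d.rp d.l]⟩)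

/-- Pushing a value in the monitor queue with output port `u`
(the queue's single parameter port is `u'`). -/
inductive PushQ (u : Port) (v : Value) : LBinders → LBinders → Prop
  | head {b : Binder Value} {bs : LBinders} {u' : Port} :
      b.out = u → b.params = [u'] →
      PushQ u v (b :: bs)
        (⟨b.out, b.queue ++ [Store.single u' v], b.f, b.params⟩ :: bs)
  | tail {b : Binder Value} {bs bs' : LBinders} :
      PushQ u v bs bs' → PushQ u v (b :: bs) (b :: bs')

/-- Pushing a value in the queues of all given receiver roles. -/
inductive PushAll (γ : GMap) (l : MLabel) (v : Value) :
    List Role → LBinders → LBinders → Prop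
  | nil {L : LBinders} : PushAll γ l v [] L L
  | cons {q : Role} {qs : List Role} {L L1 L2 : LBinders} :
      PushQ (γ.l q l) v L L1 → PushAll γ l v qs L1 L2 →
      PushAll γ l v (q :: qs) L L2

/-- The fill operation placing the in-transit values of a choreography in
the monitor queues (Fig. 16 of the paper). -/
inductive Fill (γ : GMap) : Chor → LBinders → LBinders → Prop
  | comm {p : Role} {l : MLabel} {qs : List Role} {G : Chor} {L L' : LBinders} :
      Fill γ G L L' → Fill γ (.comm p l qs G) L L'
  | commT {l : MLabel} {v : Value} {qs : List Role} {G : Chor} {L L1 L' : LBinders} :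
      PushAll γ l v qs L L1 → Fill γ G L1 L' → Fill γ (.commT l v qs G) L L'
  | sel {p : Role} {l : MLabel} {qs : List Role} {G1 G2 : Chor} {L L' : LBinders} :
      Fill γ G1 L L' → Fill γ G2 L L' → Fill γ (.sel p l qs G1 G2) L L'
  | selTL {l : MLabel} {qs : List Role} {G1 G2 : Chor} {L L1 L' : LBinders} :
      PushAll γ l .inl qs L L1 → Fill γ G1 L1 L' →
      Fill γ (.selT l .inl qs G1 G2) L L'
  | selTR {l : MLabel} {qs : List Role} {G1 G2 : Chor} {L L1 L' : LBinders} :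
      PushAll γ l .inr qs L L1 → Fill γ G2 L1 L' →
      Fill γ (.selT l .inr qs G1 G2) L L'
  | mu {X : RecVar} {G : Chor} {L L' : LBinders} :
      Fill γ G L L' → Fill γ (.mu X G) L L'
  | var {X : RecVar} {L : LBinders} : Fill γ (.var X) L L
  | end_ {L : LBinders} : Fill γ .end_ L L

open Classical in
/-- Renaming of a store along an injective port renaming. -/
noncomputable def renStore (ρ : Port → Port) (σ : Store Value) : Store Value :=
  fun q => if h : ∃ p, ρ p = q then σ h.choose else none

noncomputable def renBinder (ρ : Port → Port) (b : Binder Value) : Binder Value :=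
  ⟨ρ b.out, b.queue.map (renStore ρ), b.f, b.params.map ρ⟩

/-- Renaming `γ(r, L)` of local binders. -/
noncomputable def renL (ρ : Port → Port) (L : LBinders) : LBinders :=
  L.map (renBinder ρ)

def resList (zs : List Port) (P : Proc) : Proc := zs.foldr .res P

def fwdIList (ps : List (Port × Port)) (P : Proc) : Proc :=
  ps.foldr (fun zw P => .fwdI zw.1 zw.2 P) P

def fwdOList (ps : List (Port × Port)) (P : Proc) : Proc :=
  ps.foldr (fun zw P => .fwdO zw.1 zw.2 P) P

def parList : List Proc → Proc
  | [] => .nil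
  | [P] => P
  | P :: Ps => .par P (parList Ps)

/-- The wrapper used by the encoding of a role assignment `p = C`. -/
def raWrap (γ : GMap) (p : Role) (ins outs : List Port) (P : Proc) : Proc :=
  resList (ins ++ outs)
    (fwdIList (ins.map fun x => (γ.p p x, x))
      (fwdOList (outs.map fun y => (γ.p p y, y)) P))

mutual
  /-- The encoding `⟦C⟧` of GC components (Fig. 8 of the paper), as a partial
  function presented relationally (the choice of the mapping γ and of the
  restricted ports is existentially determined by the side conditions). -/
  inductive Enc : Component → Proc → Prop
    | base {ins outs : List Port} {L : LBinders} (γ : GMap) (r : Role)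
        (zs : List Port) :
        zs.Nodup →
        (∀ z ∈ zs, z ∉ ins ∧ z ∉ outs) →
        (∀ z, z ∈ zs ↔ ∃ p, (p ∈ fnL L ∨ p ∈ ins ∨ p ∈ outs) ∧ γ.p r p = z) →
        Enc (.base ins outs L)
          (resList zs
            (fwdIList (ins.map fun x => (x, γ.p r x))
              (fwdOList (outs.map fun y => (y, γ.p r y))
                (.box (renL (γ.p r) L)))))
    | comp {ins outs : List Port} {D : List CBinder} {r : Role} {F : List Fwd}
        {R : List (Role × Component)} {G : Chor} (γ : GMap) (zs : List Port)
        (fis fos : List Fwd) (rs : List Role) (Ps : List Proc) (PR : Proc)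
        (Lq : LBinders) :
        F = fis ++ fos →
        (∀ fw ∈ fis, fw.src ∈ ins) →
        (∀ fw ∈ fos, fw.dst ∈ outs) →
        rs.Nodup →
        (∀ p, p ∈ rs ↔ p ∈ G.roles) →
        List.Forall₂ (fun p P => GEnc G p D γ P) rs Ps →
        RAEnc γ R PR →
        Fill γ G (monQueues D γ) Lq →
        zs.Nodup →
        (∀ z ∈ zs, z ∉ ins ∧ z ∉ outs) →
        (∀ z, z ∈ zs ↔
          (∃ d ∈ D, z = γ.p d.rq d.x ∨ z = γ.p d.rp d.y ∨
            z = γ.l d.rq d.l ∨ z = γ.l d.rp d.l) ∨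
          (∃ fw ∈ fis, z = γ.p r fw.dst) ∨
          (∃ fw ∈ fos, z = γ.p r fw.src)) →
        Enc (.comp ins outs D r F R G)
          (resList zs
            (fwdIList (fis.map fun fw => (fw.src, γ.p r fw.dst))
              (fwdOList (fos.map fun fw => (fw.dst, γ.p r fw.src))
                (.par PR (.par (parList Ps) (.box Lq))))))

  /-- The encoding `⟦R⟧_γ` of role assignments. -/
  inductive RAEnc : GMap → List (Role × Component) → Proc → Prop
    | single {γ : GMap} {p : Role} {C : Component} {P : Proc} :
        Enc C P → RAEnc γ [(p, C)] (raWrap γ p C.ins C.outs P)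
    | cons {γ : GMap} {p : Role} {C : Component} {P Q : Proc}
        {R : List (Role × Component)} :
        Enc C P → RAEnc γ R Q →
        RAEnc γ ((p, C) :: R) (.par (raWrap γ p C.ins C.outs P) Q)
end

theorem merge_symm {T1 T2 T : LType} (h : Merge T1 T2 T) : Merge T2 T1 T := by
  induction h with
  | outL _ ih => exact .outR ih
  | outR _ ih => exact .outL ih
  | inpL _ ih => exact .inpR ih
  | inpR _ ih => exact .inpL ih
  | choL _ _ ih1 ih2 => exact .choR ih1 ih2
  | choR _ _ ih1 ih2 => exact .choL ih1 ih2
  | braL _ _ ih1 ih2 => exact .braR ih1 ih2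
  | braR _ _ ih1 ih2 => exact .braL ih1 ih2
  | endL h => exact .endR h
  | endR h => exact .endL h
  | unfold _ ih => exact .unfold ih
  | var => exact .var

/-- **Merge is commutative** (Lemma 7, second item): if `T = T1 ⋈ T2` then
`T = T2 ⋈ T1`. -/
theorem merge_comm
    (T T1 T2 : LType) (h : MergeD T1 T2 T) : MergeD T2 T1 T :=
  ⟨merge_symm h.1, h.2.symm⟩

end GC
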